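/- Let A, B, C ∈ Mₙ(ℂ). Then as τ → 0 (τ real), the triple-exponential matrix T(τ) = exp((τ²/12)·B + (τ³/48)·C) · exp(τ·A) · exp(−(τ²/12)·B + (τ³/48)·C) satisfies T(τ) = I + τ·A + (τ²/2)·A² + τ³·(A³/6 + C/24 + (BA − AB)/12) + τ⁴·(A⁴/24 + (AC + CA)/48 + (BA² − A²B)/24) + O(τ⁵); i.e., the triple-exponential scheme TES4 agrees with the symmetric fourth-order transition operator through order τ⁴. -/

import Mathlib

/-!
Work in an arbitrary real Banach algebra `𝔸`. Each factor is `exp (p τ)` for a polynomial `p` in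
`τ` with coefficients in `𝔸` vanishing to order `j` at `0`, so Taylor's formula for `exp` replaces
it by the truncated series `∑_{k<m} p(τ)^k / k!` up to `O(τ^(j m))`: orders `3, 5, 3` suffice
for the three factors. The product of the truncations is again such a polynomial, namely the
evaluation at the central element `τ • 1` of a polynomial in `𝔸[X]`, and its coefficients below
degree `5` are those of the target. Since the entrywise sup norm on matrices is not
submultiplicative, the matrix case is obtained from the `L∞` operator norm, which dominates it.
-/

open Matrix Filter Asymptotics
open scoped Topology

attribute [local instance] Matrix.normedAddCommGroup Matrix.normedSpace

open Polynomial NormedSpace Finset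
open scoped Nat

noncomputable def expPartialSum {A : Type*} [Semiring A] [Module ℝ A] (m : ℕ) (x : A) : A :=
  ∑ k ∈ range m, (k !⁻¹ : ℝ) • x ^ k

lemma AlgHom.map_expPartialSum {A B : Type*} [Semiring A] [Algebra ℝ A] [Semiring B]
    [Algebra ℝ B] (f : A →ₐ[ℝ] B) (m : ℕ) (x : A) :
    f (expPartialSum m x) = expPartialSum m (f x) := by
  simp [expPartialSum]

namespace Polynomial

section Algebra

variable {R 𝔸 : Type*} [CommSemiring R] [Semiring 𝔸] [Algebra R 𝔸]

noncomputable def evalScalar (τ : R) : 𝔸[X] →ₐ[R] 𝔸 :=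
  eval₂AlgHom (AlgHom.id R 𝔸) (algebraMap R 𝔸 τ) fun a => Algebra.commute_algebraMap_right τ a

@[simp]
lemma evalScalar_X (τ : R) : evalScalar τ (X : 𝔸[X]) = algebraMap R 𝔸 τ :=
  eval₂_X _ _

@[simp]
lemma evalScalar_monomial (τ : R) (k : ℕ) (a : 𝔸) :
    evalScalar τ (monomial k a) = τ ^ k • a := by
  change eval₂ (RingHom.id 𝔸) (algebraMap R 𝔸 τ) (monomial k a) = _
  rw [eval₂_monomial, RingHom.id_apply, ← map_pow, ← Algebra.commutes, ← Algebra.smul_def]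

lemma evalScalar_X_pow_mul (τ : R) (k : ℕ) (p : 𝔸[X]) :
    evalScalar τ (X ^ k * p) = τ ^ k • evalScalar τ p := by
  rw [map_mul, map_pow, evalScalar_X, ← map_pow, ← Algebra.smul_def]

lemma X_pow_dvd_monomial {j k : ℕ} (h : j ≤ k) (a : 𝔸) : X ^ j ∣ monomial k a :=
  X_pow_dvd_iff.2 fun d hd => by rw [coeff_monomial, if_neg (by omega)]

end Algebra

section Normed

variable {𝔸 : Type*} [NormedRing 𝔸] [NormedAlgebra ℝ 𝔸]

lemma continuous_evalScalar (p : 𝔸[X]) : Continuous fun τ : ℝ => evalScalar τ p := by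
  induction p using Polynomial.induction_on' with
  | add p q hp hq => simp only [map_add]; exact hp.add hq
  | monomial k a =>
    simp only [evalScalar_monomial]
    exact (continuous_pow k).smul continuous_const

lemma isBigO_evalScalar_of_X_pow_dvd {p : 𝔸[X]} {m : ℕ} (h : X ^ m ∣ p) :
    (fun τ : ℝ => evalScalar τ p) =O[𝓝 0] fun τ => τ ^ m := by
  obtain ⟨q, rfl⟩ := h
  have hq := ((continuous_evalScalar q).tendsto 0).isBigO_one ℝ
  simpa [evalScalar_X_pow_mul] using (isBigO_refl (fun τ : ℝ => τ ^ m) _).smul hq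

end Normed

end Polynomial

lemma Asymptotics.IsBigO.mul_sub_mul {α 𝔸 : Type*} [NormedRing 𝔸] {l : Filter α}
    {f₁ f₂ g₁ g₂ : α → 𝔸} {k : α → ℝ} (hf₁ : f₁ =O[l] (fun _ => (1 : ℝ)))
    (hg₂ : g₂ =O[l] (fun _ => (1 : ℝ))) (h₁ : (fun t => f₁ t - g₁ t) =O[l] k)
    (h₂ : (fun t => f₂ t - g₂ t) =O[l] k) :
    (fun t => f₁ t * f₂ t - g₁ t * g₂ t) =O[l] k := by
  have split : ∀ t, f₁ t * f₂ t - g₁ t * g₂ t = f₁ t * (f₂ t - g₂ t) + (f₁ t - g₁ t) * g₂ t := by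
    intro t
    noncomm_ring
  simp_rw [split]
  refine IsBigO.add ?_ ?_
  · simpa using hf₁.mul h₂
  · simpa using h₁.mul hg₂

section Exp

variable {𝔸 : Type*} [NormedRing 𝔸] [NormedAlgebra ℝ 𝔸] [CompleteSpace 𝔸]

lemma isBigO_exp_sub_expPartialSum (m : ℕ) :
    (fun x : 𝔸 => exp x - expPartialSum m x) =O[𝓝 0] fun x => ‖x‖ ^ m := by
  simpa [FormalMultilinearSeries.partialSum, expSeries_apply_eq, expPartialSum]
    using (exp_hasFPowerSeriesAt_zero (𝕂 := ℝ) (𝔸 := 𝔸)).isBigO_sub_partialSum_pow m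

lemma Asymptotics.IsBigO.exp_sub_expPartialSum {α : Type*} {l : Filter α} {f : α → 𝔸}
    {g : α → ℝ} (hf : f =O[l] g) (hg : Tendsto g l (𝓝 0)) (m : ℕ) :
    (fun t => exp (f t) - expPartialSum m (f t)) =O[l] fun t => g t ^ m :=
  ((isBigO_exp_sub_expPartialSum m).comp_tendsto (hf.trans_tendsto hg)).trans (hf.norm_left.pow m)

lemma isBigO_exp_evalScalar_sub {p : 𝔸[X]} {j : ℕ} (hj : j ≠ 0) (hp : X ^ j ∣ p) (m : ℕ) :
    (fun τ : ℝ => exp (evalScalar τ p) - evalScalar τ (expPartialSum m p))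
      =O[𝓝 0] fun τ => τ ^ (j * m) := by
  have hg : Tendsto (fun τ : ℝ => τ ^ j) (𝓝 0) (𝓝 0) :=
    (continuous_pow j).tendsto' 0 0 (zero_pow hj)
  simpa [AlgHom.map_expPartialSum, pow_mul] using
    (isBigO_evalScalar_of_X_pow_dvd hp).exp_sub_expPartialSum hg m

end Exp

lemma X_pow_five_dvd_tes4_sub {𝔸 : Type*} [Ring 𝔸] [Algebra ℝ 𝔸] (A B C : 𝔸) :
    X ^ 5 ∣ expPartialSum 3 (monomial 2 ((12 : ℝ)⁻¹ • B) + monomial 3 ((48 : ℝ)⁻¹ • C))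
      * expPartialSum 5 (monomial 1 A)
      * expPartialSum 3 (monomial 2 (-((12 : ℝ)⁻¹ • B)) + monomial 3 ((48 : ℝ)⁻¹ • C))
      - (monomial 0 1 + monomial 1 A + monomial 2 ((2 : ℝ)⁻¹ • A ^ 2)
        + monomial 3 ((6 : ℝ)⁻¹ • A ^ 3 + (24 : ℝ)⁻¹ • C + (12 : ℝ)⁻¹ • (B * A - A * B))
        + monomial 4 ((24 : ℝ)⁻¹ • A ^ 4 + (48 : ℝ)⁻¹ • (A * C + C * A)
          + (24 : ℝ)⁻¹ • (B * A ^ 2 - A ^ 2 * B))) := by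
  refine X_pow_dvd_iff.2 fun d hd => ?_
  simp only [expPartialSum, sum_range_succ, sum_range_zero, pow_succ, pow_zero, one_mul, mul_add,
    add_mul, monomial_mul_monomial, smul_add, smul_monomial, ← monomial_zero_one, zero_add,
    coeff_add, coeff_sub, coeff_monomial]
  interval_cases d <;> norm_num <;> module

theorem tes4_expansion_of_normedAlgebra {𝔸 : Type*} [NormedRing 𝔸] [NormedAlgebra ℝ 𝔸]
    [CompleteSpace 𝔸] (A B C : 𝔸) :
    (fun τ : ℝ =>
        (exp ((τ ^ 2 / 12 : ℝ) • B + (τ ^ 3 / 48 : ℝ) • C) * exp (τ • A)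
          * exp (-((τ ^ 2 / 12 : ℝ) • B) + (τ ^ 3 / 48 : ℝ) • C)) -
          (1 + τ • A + (τ ^ 2 / 2 : ℝ) • A ^ 2
            + τ ^ 3 • ((6 : ℝ)⁻¹ • A ^ 3 + (24 : ℝ)⁻¹ • C + (12 : ℝ)⁻¹ • (B * A - A * B))
            + τ ^ 4 • ((24 : ℝ)⁻¹ • A ^ 4 + (48 : ℝ)⁻¹ • (A * C + C * A)
              + (24 : ℝ)⁻¹ • (B * A ^ 2 - A ^ 2 * B))))
      =O[𝓝 0] fun τ => τ ^ 5 := by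
  have hpoly := isBigO_evalScalar_of_X_pow_dvd (X_pow_five_dvd_tes4_sub A B C)
  set a₁ : 𝔸[X] := monomial 2 ((12 : ℝ)⁻¹ • B) + monomial 3 ((48 : ℝ)⁻¹ • C)
  set a₂ : 𝔸[X] := monomial 1 A
  set a₃ : 𝔸[X] := monomial 2 (-((12 : ℝ)⁻¹ • B)) + monomial 3 ((48 : ℝ)⁻¹ • C)
  have hdvd : ∀ b c : 𝔸, X ^ 2 ∣ monomial 2 b + monomial 3 c := fun b c =>
    dvd_add (X_pow_dvd_monomial le_rfl b) (X_pow_dvd_monomial (by norm_num) c)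
  have h65 : (fun τ : ℝ => τ ^ 6) =O[𝓝 0] fun τ => τ ^ 5 := (isLittleO_pow_pow (by norm_num)).isBigO
  have h₁ := (isBigO_exp_evalScalar_sub (p := a₁) two_ne_zero (hdvd _ _) 3).trans h65
  have h₂ := isBigO_exp_evalScalar_sub one_ne_zero (X_pow_dvd_monomial le_rfl A) 5
  have h₃ := (isBigO_exp_evalScalar_sub (p := a₃) two_ne_zero (hdvd _ _) 3).trans h65
  have hbdd (p : 𝔸[X]) : (fun τ : ℝ => evalScalar τ p) =O[𝓝 0] (fun _ => (1 : ℝ)) :=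
    ((continuous_evalScalar p).tendsto 0).isBigO_one ℝ
  have hexp (p : 𝔸[X]) : Continuous fun τ : ℝ => exp (evalScalar τ p) :=
    continuous_iff_continuousAt.2 fun τ =>
      (exp_analytic (𝕂 := ℝ) _).continuousAt.comp (continuous_evalScalar p).continuousAt
  have h₁₂ := (((hexp a₁).tendsto 0).isBigO_one ℝ).mul_sub_mul (hbdd _) h₁ h₂
  have hprod :=
    ((((hexp a₁).mul (hexp a₂)).tendsto 0).isBigO_one ℝ).mul_sub_mul (hbdd _) h₁₂ h₃
  refine (hprod.add hpoly).congr_left fun τ => ?_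
  simp only [Pi.mul_apply, map_sub, map_mul, sub_add_sub_cancel, a₁, a₂, a₃, map_add, map_neg,
    map_one, evalScalar_monomial, monomial_zero_left, pow_one, smul_add, smul_smul, div_eq_mul_inv]

-- `‖A‖` on the left is the entrywise sup norm, the instance in force for the statement.
lemma Matrix.norm_le_linfty_opNorm {m n α : Type*} [Fintype m] [Fintype n] [NormedAddCommGroup α]
    (A : Matrix m n α) :
    ‖A‖ ≤ letI := Matrix.linftyOpNormedAddCommGroup (m := m) (n := n) (α := α); ‖A‖ := by
  let _ : NormedAddCommGroup (Matrix m n α) := Matrix.linftyOpNormedAddCommGroup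
  refine (Matrix.norm_le_iff (norm_nonneg _)).2 fun i j => ?_
  rw [Matrix.linfty_opNorm_def]
  calc ‖A i j‖ ≤ ∑ k, ‖A i k‖₊ :=
        single_le_sum (f := fun k => ‖A i k‖₊) (fun _ _ => bot_le) (mem_univ j)
    _ ≤ _ := by exact_mod_cast le_sup (f := fun i => ∑ k, ‖A i k‖₊) (mem_univ i)

lemma Asymptotics.IsBigO.of_linfty_opNorm {m n α β : Type*} [Fintype m] [Fintype n]
    [NormedAddCommGroup α] {l : Filter β} {f : β → Matrix m n α} {g : β → ℝ}
    (h : letI := Matrix.linftyOpNormedAddCommGroup (m := m) (n := n) (α := α); f =O[l] g) :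
    f =O[l] g := by
  rw [isBigO_iff]
  let _ : NormedAddCommGroup (Matrix m n α) := Matrix.linftyOpNormedAddCommGroup
  obtain ⟨c, hc⟩ := isBigO_iff.1 h
  exact ⟨c, hc.mono fun x hx => (Matrix.norm_le_linfty_opNorm _).trans hx⟩

/-- the triple-exponential scheme TES4 agrees with the symmetric
fourth-order transition operator through order `τ⁴`. -/
theorem TES4_expansion
    {n : ℕ} (A B C : Matrix (Fin n) (Fin n) ℂ) :
    (fun τ : ℝ =>
        (NormedSpace.exp ((τ ^ 2 / 12 : ℝ) • B + (τ ^ 3 / 48 : ℝ) • C)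
          * NormedSpace.exp (τ • A)
          * NormedSpace.exp (-((τ ^ 2 / 12 : ℝ) • B) + (τ ^ 3 / 48 : ℝ) • C)) -
          (1 + τ • A + (τ ^ 2 / 2 : ℝ) • A ^ 2
            + τ ^ 3 • ((6 : ℝ)⁻¹ • A ^ 3 + (24 : ℝ)⁻¹ • C + (12 : ℝ)⁻¹ • (B * A - A * B))
            + τ ^ 4 • ((24 : ℝ)⁻¹ • A ^ 4 + (48 : ℝ)⁻¹ • (A * C + C * A)
              + (24 : ℝ)⁻¹ • (B * A ^ 2 - A ^ 2 * B))))
      =O[𝓝 0] fun τ => τ ^ 5 := by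
  let _ : NormedRing (Matrix (Fin n) (Fin n) ℂ) := Matrix.linftyOpNormedRing
  let _ : NormedAlgebra ℝ (Matrix (Fin n) (Fin n) ℂ) := Matrix.linftyOpNormedAlgebra
  have hcomplete : CompleteSpace (Matrix (Fin n) (Fin n) ℂ) := FiniteDimensional.complete ℝ _
  exact (@tes4_expansion_of_normedAlgebra _ _ _ hcomplete A B C).of_linfty_opNorm
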